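/- arXiv:2309.04936 — 3 statements merged into one kernel-verified Lean document; each statement's English description precedes it below -/
import Mathlib

section
/- Let A be an integral domain such that every w-ideal of A is finitely generated. Then A is GV(A)-Noetherian: for every ideal I of A there exist a GV-ideal J of A and a finitely generated subideal F ⊆ I such that J·I ⊆ F. -/
/-- `J` is a GV-ideal of the domain `A`. -/
def IsGVIdeal (A : Type*) [CommRing A] [IsDomain A] (J : Ideal A) : Prop :=
  J.FG ∧ ∀ x : FractionRing A,
    (∀ a ∈ J, x * algebraMap A (FractionRing A) a ∈
      Set.range (algebraMap A (FractionRing A))) →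
    x ∈ Set.range (algebraMap A (FractionRing A))

/-- The `w`-closure of an ideal `I`, as a subset of the quotient field:
`I_w = {x ∈ K : Jx ⊆ I for some GV-ideal J}`. -/
def wClosure {A : Type*} [CommRing A] [IsDomain A] (I : Ideal A) : Set (FractionRing A) :=
  {x : FractionRing A | ∃ J : Ideal A, IsGVIdeal A J ∧
    ∀ a ∈ J, x * algebraMap A (FractionRing A) a ∈
      algebraMap A (FractionRing A) '' I}

/-! The `w`-closure of `I` meets `A` in an ideal `W`, and `W` is a `w`-ideal: `J⁻¹ = A` for a
GV-ideal `J` puts `W_w` inside `A`, and products of GV-ideals are GV-ideals. If `W` is finitely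
generated, a single GV-ideal `J` (the product of those attached to the generators) satisfies
`J W ⊆ I`, and `F = J W` is a finitely generated subideal of `I` with `J I ⊆ F`. -/

section WIdeal

variable {A : Type*} [CommRing A] [IsDomain A]

theorem isGVIdeal_top : IsGVIdeal A ⊤ :=
  ⟨⟨{1}, by simp⟩, fun x hx => by simpa using hx 1 trivial⟩

theorem IsGVIdeal.mul {J₁ J₂ : Ideal A} (h₁ : IsGVIdeal A J₁) (h₂ : IsGVIdeal A J₂) :
    IsGVIdeal A (J₁ * J₂) := by
  refine ⟨h₁.1.mul h₂.1, fun x hx => h₁.2 x fun a ha => h₂.2 _ fun b hb => ?_⟩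
  simpa [mul_assoc] using hx (a * b) (Ideal.mul_mem_mul ha hb)

/-- `I_w ∩ A`, as an ideal of `A`. -/
def wIdeal (I : Ideal A) : Ideal A where
  carrier := {a | ∃ J : Ideal A, IsGVIdeal A J ∧ ∀ j ∈ J, a * j ∈ I}
  zero_mem' := ⟨⊤, isGVIdeal_top, fun j _ => by simp⟩
  add_mem' := by
    rintro a b ⟨J₁, h₁, ha⟩ ⟨J₂, h₂, hb⟩
    refine ⟨J₁ * J₂, h₁.mul h₂, fun j hj => ?_⟩
    rw [add_mul]
    exact I.add_mem (ha j (Ideal.mul_le_left hj)) (hb j (Ideal.mul_le_right hj))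
  smul_mem' := by
    rintro c _ ⟨J, hJ, ha⟩
    exact ⟨J, hJ, fun j hj => by rw [smul_eq_mul, mul_assoc]; exact I.mul_mem_left c (ha j hj)⟩

theorem le_wIdeal (I : Ideal A) : I ≤ wIdeal I :=
  fun _ ha => ⟨⊤, isGVIdeal_top, fun j _ => I.mul_mem_right j ha⟩

theorem exists_isGVIdeal_mul_le_of_le_wIdeal {I N : Ideal A} (hN : N.FG) (hNI : N ≤ wIdeal I) :
    ∃ J : Ideal A, IsGVIdeal A J ∧ N * J ≤ I := by
  induction N, hN using Submodule.fg_induction with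
  | singleton a =>
    obtain ⟨J, hJ, ha⟩ := hNI (Ideal.mem_span_singleton_self a)
    exact ⟨J, hJ, Ideal.span_singleton_mul_le_iff.2 ha⟩
  | sup N₁ N₂ _ _ ih₁ ih₂ =>
    obtain ⟨J₁, hJ₁, h₁⟩ := ih₁ (le_sup_left.trans hNI)
    obtain ⟨J₂, hJ₂, h₂⟩ := ih₂ (le_sup_right.trans hNI)
    refine ⟨J₁ * J₂, hJ₁.mul hJ₂, ?_⟩
    rw [Ideal.sup_mul]
    exact sup_le ((Ideal.mul_mono_right Ideal.mul_le_left).trans h₁)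
      ((Ideal.mul_mono_right Ideal.mul_le_right).trans h₂)

theorem image_subset_wClosure (I : Ideal A) :
    algebraMap A (FractionRing A) '' I ⊆ wClosure I := by
  rintro _ ⟨a, ha, rfl⟩
  exact ⟨⊤, isGVIdeal_top, fun j _ => ⟨a * j, I.mul_mem_right j ha, map_mul _ _ _⟩⟩

theorem wClosure_wIdeal (I : Ideal A) :
    wClosure (wIdeal I) = algebraMap A (FractionRing A) '' (wIdeal I) := by
  refine (image_subset_wClosure _).antisymm' ?_
  rintro x ⟨J, hJ, hx⟩
  obtain ⟨b, rfl⟩ := hJ.2 x fun a ha => by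
    obtain ⟨c, -, hc⟩ := hx a ha
    exact ⟨c, hc⟩
  have hbJ : Ideal.span {b} * J ≤ wIdeal I := by
    refine Ideal.span_singleton_mul_le_iff.2 fun a ha => ?_
    obtain ⟨c, hc, hcb⟩ := hx a ha
    rw [← map_mul, (IsFractionRing.injective A (FractionRing A)).eq_iff] at hcb
    exact hcb ▸ hc
  obtain ⟨J', hJ', hbJJ'⟩ :=
    exists_isGVIdeal_mul_le_of_le_wIdeal ((Submodule.fg_span_singleton b).mul hJ.1) hbJ
  refine ⟨b, ⟨J * J', hJ.mul hJ', ?_⟩, rfl⟩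
  rw [← Ideal.span_singleton_mul_le_iff, ← mul_assoc]
  exact hbJJ'

end WIdeal

theorem gv_noetherian_of_w_ideals_fg {A : Type*} [CommRing A] [IsDomain A]
    (hw : ∀ I : Ideal A, wClosure I = algebraMap A (FractionRing A) '' I → I.FG) :
    ∀ I : Ideal A, ∃ J : Ideal A, IsGVIdeal A J ∧
      ∃ F : Ideal A, F ≤ I ∧ F.FG ∧ J * I ≤ F := by
  intro I
  have hW : (wIdeal I).FG := hw _ (wClosure_wIdeal I)
  obtain ⟨J, hJ, hJW⟩ := exists_isGVIdeal_mul_le_of_le_wIdeal hW le_rfl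
  refine ⟨J, hJ, J * wIdeal I, ?_, hJ.1.mul hW, Ideal.mul_mono_right (le_wIdeal I)⟩
  rwa [mul_comm]
end

section
/- Let A be an integral domain and I an ideal of A such that the w-closure I_w is finitely generated. Then I is GV(A)-finite: there exist a GV-ideal J of A and a finitely generated subideal F of I such that J·I ⊆ F. -/
lemma isGVIdeal_top_s5 (A : Type*) [CommRing A] [IsDomain A] : IsGVIdeal A (⊤ : Ideal A) := by
  refine ⟨⟨{1}, by simp [Ideal.span_singleton_one]⟩, fun x hx => ?_⟩
  simpa using hx 1 trivial

lemma isGVIdeal_mul {A : Type*} [CommRing A] [IsDomain A] {J₁ J₂ : Ideal A}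
    (h₁ : IsGVIdeal A J₁) (h₂ : IsGVIdeal A J₂) : IsGVIdeal A (J₁ * J₂) := by
  refine ⟨Submodule.FG.mul h₁.1 h₂.1, fun x hx => ?_⟩
  apply h₂.2
  intro a₂ ha₂
  apply h₁.2
  intro a₁ ha₁
  have h := hx _ (Ideal.mul_mem_mul ha₁ ha₂)
  rw [map_mul] at h
  simpa [mul_comm, mul_assoc, mul_left_comm] using h

lemma isGVIdeal_prod {A : Type*} [CommRing A] [IsDomain A] {ι : Type*} (s : Finset ι)
    (J : ι → Ideal A) (h : ∀ i ∈ s, IsGVIdeal A (J i)) :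
    IsGVIdeal A (∏ i ∈ s, J i) := by
  classical
  induction s using Finset.induction_on with
  | empty => simpa [Ideal.one_eq_top] using isGVIdeal_top_s5 A
  | @insert j s hj ih =>
    rw [Finset.prod_insert hj]
    exact isGVIdeal_mul (h _ (Finset.mem_insert_self _ _))
      (ih fun i hi => h i (Finset.mem_insert_of_mem hi))

theorem gv_finite_of_wClosure_fg {A : Type*} [CommRing A] [IsDomain A] (I : Ideal A)
    (hfg : ∃ s : Finset (FractionRing A),
      (Submodule.span A (↑s : Set (FractionRing A)) : Set (FractionRing A)) = wClosure I) :
    ∃ J : Ideal A, IsGVIdeal A J ∧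
      ∃ F : Ideal A, F ≤ I ∧ F.FG ∧ J * I ≤ F := by
  classical
  obtain ⟨s, hs⟩ := hfg
  set φ := algebraMap A (FractionRing A) with hφ
  have hinj : Function.Injective φ := IsFractionRing.injective A (FractionRing A)
  have hxw : ∀ x ∈ s, ∃ J : Ideal A, IsGVIdeal A J ∧ ∀ a ∈ J, x * φ a ∈ φ '' I := by
    intro x hx
    have hx' : x ∈ wClosure I := by
      rw [← hs]; exact Submodule.subset_span (Finset.mem_coe.mpr hx)
    exact hx'
  choose Jf hJf hJmem using hxw
  refine ⟨∏ x ∈ s.attach, Jf x.1 x.2, isGVIdeal_prod _ _ (fun i _ => hJf i.1 i.2), ?_⟩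
  set J : Ideal A := ∏ x ∈ s.attach, Jf x.1 x.2 with hJ
  have hJle : ∀ x (hx : x ∈ s), J ≤ Jf x hx := by
    intro x hx
    rw [hJ, ← Finset.mul_prod_erase s.attach _ (Finset.mem_attach s ⟨x, hx⟩)]
    exact Ideal.mul_le_left
  obtain ⟨T, hT⟩ := (isGVIdeal_prod s.attach (fun x => Jf x.1 x.2) (fun i _ => hJf i.1 i.2)).1
  have hgen : ∀ t ∈ T, ∀ x ∈ s, ∃ a ∈ I, φ a = φ t * x := by
    intro t ht x hx
    have htJ : t ∈ J := by rw [hJ, ← hT]; exact Ideal.subset_span ht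
    obtain ⟨a, haI, ha⟩ := hJmem x hx t (hJle x hx htJ)
    exact ⟨a, haI, by rw [ha]; ring⟩
  choose g hgI hgeq using hgen
  set F : Ideal A := Ideal.span
    (((T.attach ×ˢ s.attach).image (fun p => g p.1.1 p.1.2 p.2.1 p.2.2) : Finset A) : Set A)
    with hF
  have hFle : F ≤ I := by
    rw [hF, Ideal.span_le]
    intro a ha
    simp only [Finset.coe_image, Set.mem_image, Finset.mem_coe] at ha
    obtain ⟨p, _, rfl⟩ := ha
    exact hgI _ _ _ _
  have hFfg : F.FG := ⟨_, rfl⟩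
  refine ⟨F, hFle, hFfg, ?_⟩
  have key : ∀ t ∈ T, ∀ a ∈ I, t * a ∈ F := by
    intro t ht a ha
    have haw : φ a ∈ wClosure I :=
      ⟨⊤, isGVIdeal_top_s5 A, fun b _ => ⟨a * b, I.mul_mem_right b ha, map_mul φ a b⟩⟩
    have hmem : φ a ∈ Submodule.span A (↑s : Set (FractionRing A)) := by
      show φ a ∈ (Submodule.span A (↑s : Set (FractionRing A)) : Set (FractionRing A))
      rw [hs]; exact haw
    obtain ⟨c, -, hc⟩ := Submodule.mem_span_finset.mp hmem
    have heq : t * a = ∑ x ∈ s.attach, c x.1 * g t ht x.1 x.2 := by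
      apply hinj
      rw [map_mul, map_sum, ← hc]
      rw [← Finset.sum_attach s (fun x => c x • x), Finset.mul_sum]
      refine Finset.sum_congr rfl fun x _ => ?_
      rw [map_mul, hgeq t ht x.1 x.2, Algebra.smul_def]
      ring
    rw [heq]
    refine Ideal.sum_mem _ fun x _ => F.mul_mem_left _ (Ideal.subset_span ?_)
    exact Finset.mem_coe.mpr (Finset.mem_image.mpr
      ⟨(⟨t, ht⟩, x), Finset.mem_product.mpr ⟨Finset.mem_attach _ _, Finset.mem_attach _ _⟩, rfl⟩)
  refine Ideal.mul_le.mpr fun r hr a ha => ?_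
  have hr' : r ∈ Ideal.span (T : Set A) := by rwa [hT]
  refine Submodule.span_induction (fun t ht => key t ht a ha) (by simp) ?_ ?_ hr'
  · intro x y _ _ hx hy
    rw [add_mul]; exact F.add_mem hx hy
  · intro c x _ hx
    rw [smul_eq_mul, mul_assoc]; exact F.mul_mem_left c hx
end

section
/- Let A be a non-Noetherian unique factorization domain. Then A is GV(A)-Noetherian but the generalized fraction ring A_{GV(A)} = {x ∈ K : Hx ⊆ A for some GV-ideal H} equals A and hence is not Noetherian. In particular, 𝒮-Noetherian does not imply that A_𝒮 is Noetherian. -/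
/-- The generalized fraction ring of `A` with respect to the system of GV-ideals,
as a subset of the quotient field: `{x ∈ K : Hx ⊆ A for some GV-ideal H}`. -/
def gvFractions (A : Type*) [CommRing A] [IsDomain A] : Set (FractionRing A) :=
  {x : FractionRing A | ∃ H : Ideal A, IsGVIdeal A H ∧
    ∀ a ∈ H, x * algebraMap A (FractionRing A) a ∈
      Set.range (algebraMap A (FractionRing A))}

/-- A finitely generated ideal whose generators have unit gcd is a GV-ideal. -/
lemma isGVIdeal_of_gcd_isUnit {A : Type*} [CommRing A] [IsDomain A]
    [StrongNormalizedGCDMonoid A] (t : Finset A) (hu : IsUnit (t.gcd id)) :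
    IsGVIdeal A (Ideal.span (t : Set A)) := by
  constructor
  · exact ⟨t, rfl⟩
  · intro x hx
    obtain ⟨⟨u, v⟩, hv⟩ := IsLocalization.surj (nonZeroDivisors A) x
    have hvne : (v : A) ≠ 0 := nonZeroDivisors.coe_ne_zero v
    have hdvd : ∀ a ∈ t, (v : A) ∣ u * a := by
      intro a ha
      obtain ⟨c, hc⟩ := hx a (Ideal.subset_span ha)
      refine ⟨c, ?_⟩
      have h : algebraMap A (FractionRing A) (u * a) =
          algebraMap A (FractionRing A) ((v : A) * c) := by
        rw [map_mul, map_mul, ← hv, hc]; ring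
      exact IsFractionRing.injective A (FractionRing A) h
    have h1 : (v : A) ∣ t.gcd (fun a => u * a) :=
      Finset.dvd_gcd fun a ha => hdvd a ha
    rw [Finset.gcd_mul_left] at h1
    have h2 : (v : A) ∣ u := by
      have hassoc : Associated (normalize u * t.gcd id) u := by
        refine Associated.trans (Associated.mul_left _ (associated_one_iff_isUnit.mpr hu)) ?_
        rw [mul_one]
        exact normalize_associated u
      exact h1.trans hassoc.dvd
    obtain ⟨w, hw⟩ := h2
    refine ⟨w, ?_⟩
    have hvK : algebraMap A (FractionRing A) (v : A) ≠ 0 := by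
      simpa using (IsFractionRing.to_map_ne_zero_iff_ne_zero (K := FractionRing A)).mpr hvne
    have hv' := hv
    rw [hw, map_mul] at hv'
    exact mul_right_cancel₀ hvK (by rw [hv']; ring)

theorem ufd_gv_noetherian_but_fractions_not_noetherian
    {A : Type*} [CommRing A] [IsDomain A] [UniqueFactorizationMonoid A]
    (hnotNoeth : ¬ IsNoetherianRing A) :
    (∀ I : Ideal A, ∃ H : Ideal A, IsGVIdeal A H ∧
        ∃ F : Ideal A, F ≤ I ∧ F.FG ∧ H * I ≤ F) ∧
      gvFractions A = Set.range (algebraMap A (FractionRing A)) ∧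
      ∀ R : Subring (FractionRing A), (R : Set (FractionRing A)) = gvFractions A →
        ¬ IsNoetherianRing R := by
  classical
  letI : StrongNormalizationMonoid A := UniqueFactorizationMonoid.strongNormalizationMonoid
  letI : StrongNormalizedGCDMonoid A := UniqueFactorizationMonoid.toStrongNormalizedGCDMonoid A
  have htop : IsGVIdeal A (⊤ : Ideal A) := by
    have h := isGVIdeal_of_gcd_isUnit (A := A) ({1} : Finset A) (by simp)
    have h1 : ((({1} : Finset A) : Set A)) = ({1} : Set A) := by simp
    rwa [h1, Ideal.span_singleton_one] at h
  have heq : gvFractions A = Set.range (algebraMap A (FractionRing A)) := by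
    ext x
    constructor
    · rintro ⟨H, hGV, hx⟩
      exact hGV.2 x hx
    · rintro ⟨a, rfl⟩
      exact ⟨⊤, htop, fun b _ => ⟨a * b, by rw [map_mul]⟩⟩
  refine ⟨?_, heq, ?_⟩
  · intro I
    by_cases hI : I = ⊥
    · exact ⟨⊤, htop, ⊥, bot_le, Submodule.fg_bot, by simp [hI]⟩
    · obtain ⟨b, hbI, hbne⟩ := Submodule.exists_mem_ne_zero_of_ne_bot hI
      set D : Set A := {d : A | ∃ s : Finset A, (↑s : Set A) ⊆ I ∧ b ∈ s ∧ d = s.gcd id}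
        with hD
      have hDne : D.Nonempty := ⟨({b} : Finset A).gcd id, {b}, by simpa using hbI, by simp, rfl⟩
      obtain ⟨d, hdD, hdmin⟩ := wellFounded_dvdNotUnit.has_min D hDne
      obtain ⟨s, hsI, hbs, hds⟩ := hdD
      have hdb : d ∣ b := hds ▸ Finset.gcd_dvd hbs
      have hdne : d ≠ 0 := fun h => hbne (by simpa [h] using hdb)
      have hddvd : ∀ x ∈ I, d ∣ x := by
        intro x hxI
        have hd'D : (insert x s).gcd id ∈ D := ⟨insert x s, by
          intro y hy
          rcases Finset.mem_insert.mp (by exact_mod_cast hy) with h | h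
          · exact h ▸ hxI
          · exact hsI h, Finset.mem_insert_of_mem hbs, rfl⟩
        have hd'd : (insert x s).gcd id ∣ d := hds ▸ Finset.gcd_mono (Finset.subset_insert x s)
        have hnotdnu : ¬ DvdNotUnit ((insert x s).gcd id) d := hdmin _ hd'D
        have hdd' : d ∣ (insert x s).gcd id := by
          by_contra h
          exact hnotdnu (dvd_and_not_dvd_iff.mp ⟨hd'd, h⟩)
        exact hdd'.trans (Finset.gcd_dvd (Finset.mem_insert_self x s))
      set q : A → A := fun x => if h : d ∣ x then h.choose else 0 with hqdef
      have hqspec : ∀ x ∈ s, x = d * q x := by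
        intro x hx
        have h : d ∣ x := hddvd x (hsI hx)
        simp only [hqdef, dif_pos h]
        exact h.choose_spec
      set t : Finset A := s.image q with ht
      have hgcd : IsUnit (t.gcd id) := by
        have h1 : s.gcd id = s.gcd (fun x => d * q x) :=
          Finset.gcd_congr rfl (fun x hx => hqspec x hx)
        rw [Finset.gcd_mul_left] at h1
        have h2 : t.gcd id = s.gcd q := by rw [ht, Finset.gcd_image]; rfl
        rw [← h2, ← hds, normalize_apply, mul_assoc] at h1
        have h3 : d * 1 = d * ((normUnit d : A) * t.gcd id) := by rw [mul_one, ← h1]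
        have h4 : (normUnit d : A) * t.gcd id = 1 := (mul_left_cancel₀ hdne h3).symm
        exact isUnit_of_mul_isUnit_right
          (show IsUnit ((normUnit d : A) * t.gcd id) by rw [h4]; exact isUnit_one)
      set F : Ideal A := Ideal.span ((t.image (fun a => d * a) : Finset A) : Set A) with hF
      have hkey : ∀ h ∈ Ideal.span (t : Set A), d * h ∈ F := by
        intro h hh
        refine Submodule.span_induction (p := fun y _ => d * y ∈ F) ?_ ?_ ?_ ?_ hh
        · intro a ha
          exact Ideal.subset_span (by
            exact_mod_cast Finset.mem_image.mpr ⟨a, by exact_mod_cast ha, rfl⟩)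
        · simpa using F.zero_mem
        · intro y z _ _ hy hz
          rw [mul_add]; exact Ideal.add_mem _ hy hz
        · intro r y _ hy
          have : d * (r • y) = r * (d * y) := by rw [smul_eq_mul]; ring
          rw [this]; exact Ideal.mul_mem_left _ _ hy
      refine ⟨Ideal.span (t : Set A), isGVIdeal_of_gcd_isUnit t hgcd, F, ?_, ⟨_, rfl⟩, ?_⟩
      · rw [hF, Ideal.span_le]
        intro y hy
        obtain ⟨a, hat, rfl⟩ := Finset.mem_image.mp (by exact_mod_cast hy)
        obtain ⟨x, hxs, rfl⟩ := Finset.mem_image.mp hat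
        have hx := hqspec x hxs
        exact show (d * q x : A) ∈ (I : Set A) from hx ▸ hsI hxs
      · rw [Ideal.mul_le]
        intro h hh x hxI
        obtain ⟨c, rfl⟩ := hddvd x hxI
        have : h * (d * c) = c * (d * h) := by ring
        rw [this]
        exact Ideal.mul_mem_left _ _ (hkey h hh)
  · intro R hR hNoeth
    have hR' : R = (algebraMap A (FractionRing A)).range := by
      apply SetLike.ext'
      rw [hR, heq]
      rfl
    rw [hR'] at hNoeth
    have hinj : Function.Injective (algebraMap A (FractionRing A)).rangeRestrict := by
      intro a b h
      exact IsFractionRing.injective A (FractionRing A) (congrArg Subtype.val h)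
    have e : A ≃+* (algebraMap A (FractionRing A)).range :=
      RingEquiv.ofBijective (algebraMap A (FractionRing A)).rangeRestrict
        ⟨hinj, RingHom.rangeRestrict_surjective _⟩
    exact hnotNoeth (@isNoetherianRing_of_ringEquiv _ _ _ _ e.symm hNoeth)
end
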